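/- For a finite abstract simplicial complex G, let f(G) denote the number of odd-dimensional simplices (sets of even cardinality) in G, and let A be the adjacency matrix of the connection graph G' (vertices are the simplices of G, two distinct simplices adjacent iff they intersect). Then det(1+A) = (-1)^{f(G)}. -/

import Mathlib

/-!
Writing `F` for the inclusion matrix of the simplices and `ω(t) = -(-1)^|t|`, one has
`1 + A = F · diag ω · Fᵀ`: the `(x, y)` entry of the right side sums `ω` over the simplices
contained in `x ∩ y`, which by closure under subsets are all nonempty subsets of `x ∩ y`, and
that alternating sum is `1` or `0` according as `x ∩ y` is nonempty or empty. Ordered by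
cardinality, `F` is unitriangular, so `det (1 + A) = ∏ ω(t) = (-1)^f`.
-/

open Finset Matrix

theorem Finset.prod_neg_neg_one_pow {ι R : Type*} [CommRing R] (s : Finset ι) (n : ι → ℕ) :
    ∏ i ∈ s, -(-1 : R) ^ n i = (-1) ^ #{i ∈ s | Even (n i)} := by
  have hsign : ∀ i, -(-1 : R) ^ n i = if Even (n i) then -1 else 1 := fun i => by
    rcases Nat.even_or_odd (n i) with h | h
    · simp [h, h.neg_one_pow]
    · simp [h.neg_one_pow, Nat.not_even_iff_odd.2 h]
  simp only [hsign, prod_ite, prod_const, one_pow, mul_one]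

theorem Finset.sum_nonempty_powerset_neg_neg_one_pow {α R : Type*} [DecidableEq α] [Ring R]
    (s : Finset α) :
    ∑ t ∈ s.powerset with t.Nonempty, -(-1 : R) ^ #t = if s.Nonempty then 1 else 0 := by
  have hsum : ∑ t ∈ s.powerset, (-1 : R) ^ #t = if s = ∅ then 1 else 0 := by
    exact_mod_cast congrArg (Int.cast : ℤ → R) sum_powerset_neg_one_pow_card
  simp only [nonempty_iff_ne_empty, filter_ne' s.powerset ∅,
    sum_erase_eq_sub (empty_mem_powerset s), sum_neg_distrib, hsum]
  by_cases h : s = ∅ <;> simp [h]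

section SimplicialComplex

variable {V R : Type*} [DecidableEq V] (G : Finset (Finset V))

def inclusionMatrix [Zero R] [One R] : Matrix G G R :=
  of fun x t => if (t : Finset V) ⊆ x then 1 else 0

def connectionMatrix [Zero R] [One R] : Matrix G G R :=
  of fun x y => if ((x : Finset V) ∩ y).Nonempty then 1 else 0

theorem det_inclusionMatrix [CommRing R] : (inclusionMatrix G : Matrix G G R).det = 1 := by
  rw [← det_transpose]
  have hblock : (inclusionMatrix G : Matrix G G R)ᵀ.BlockTriangular fun t => #(t : Finset V) :=
    fun x t hlt => if_neg fun hsub => (card_le_card hsub).not_gt hlt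
  rw [hblock.det]
  refine prod_eq_one fun k _ => ?_
  suffices (inclusionMatrix G : Matrix G G R)ᵀ.toSquareBlock (fun t => #(t : Finset V)) k = 1 by
    rw [this, det_one]
  ext ⟨x, hx⟩ ⟨t, ht⟩
  simp only [toSquareBlock_def, transpose_apply, inclusionMatrix, of_apply, one_apply]
  refine if_congr ?_ rfl rfl
  rw [Subtype.mk.injEq, Subtype.ext_iff]
  exact ⟨fun h => eq_of_subset_of_card_le h (hx.trans ht.symm).ge, fun h => h ▸ subset_rfl⟩

variable {G}

theorem filter_subset_eq_powerset_nonempty (hne : ∀ x ∈ G, x.Nonempty)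
    (hclosed : ∀ x ∈ G, ∀ y ⊆ x, y.Nonempty → y ∈ G) {x s : Finset V} (hx : x ∈ G)
    (hs : s ⊆ x) :
    {t ∈ G | t ⊆ s} = {t ∈ s.powerset | t.Nonempty} := by
  ext t
  simp only [mem_filter, mem_powerset]
  exact ⟨fun ⟨htG, hts⟩ => ⟨hts, hne t htG⟩,
    fun ⟨hts, ht⟩ => ⟨hclosed x hx t (hts.trans hs) ht, hts⟩⟩

theorem connectionMatrix_eq_mul_diagonal_mul [Ring R] (hne : ∀ x ∈ G, x.Nonempty)
    (hclosed : ∀ x ∈ G, ∀ y ⊆ x, y.Nonempty → y ∈ G) :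
    (connectionMatrix G : Matrix G G R) =
      inclusionMatrix G * diagonal (fun t : G => -(-1) ^ #(t : Finset V)) *
        (inclusionMatrix G)ᵀ := by
  ext x y
  have hterm : ∀ t : G,
      ((inclusionMatrix G : Matrix G G R) * diagonal (fun t : G => -(-1 : R) ^ #(t : Finset V)))
        x t * (inclusionMatrix G)ᵀ t y =
      if (t : Finset V) ⊆ x ∩ y then -(-1) ^ #(t : Finset V) else 0 := by
    intro t
    simp only [mul_diagonal, transpose_apply, inclusionMatrix, of_apply, subset_inter_iff]
    split_ifs <;> simp_all
  rw [mul_apply, Fintype.sum_congr _ _ hterm,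
    sum_coe_sort G fun t => if t ⊆ x ∩ y then -(-1 : R) ^ #t else 0, ← sum_filter,
    filter_subset_eq_powerset_nonempty hne hclosed x.2 inter_subset_left,
    sum_nonempty_powerset_neg_neg_one_pow]
  rfl

end SimplicialComplex

theorem unimodularity_general {V : Type*} [DecidableEq V]
    (G : Finset (Finset V))
    (hne : ∀ x ∈ G, x.Nonempty)
    (hclosed : ∀ x ∈ G, ∀ y ⊆ x, y.Nonempty → y ∈ G) :
    Matrix.det (Matrix.of fun x y : {z // z ∈ G} =>
        if ((x : Finset V) ∩ (y : Finset V)).Nonempty then (1 : ℤ) else 0)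
      = (-1) ^ (G.filter fun x => Even x.card).card := by
  change (connectionMatrix G : Matrix G G ℤ).det = _
  rw [connectionMatrix_eq_mul_diagonal_mul hne hclosed, det_mul, det_mul, det_transpose,
    det_inclusionMatrix, det_diagonal, one_mul, mul_one,
    prod_coe_sort G fun t => -(-1 : ℤ) ^ #t, prod_neg_neg_one_pow]

/-- Unimodularity theorem: for a finite abstract simplicial complex `G`
(a collection of nonempty finsets closed under nonempty subsets), the
Fredholm determinant `det (1 + A(G'))` of the connection graph equals
`(-1)^(f G)` where `f G` is the number of odd-dimensional (even cardinality)
simplices. The matrix below is exactly `1 + A(G')`: its `(x,y)` entry is `1`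
iff the simplices `x` and `y` intersect (in particular the diagonal is `1`). -/
theorem unimodularity {V : Type*} [Fintype V] [DecidableEq V]
    (G : Finset (Finset V))
    (hne : ∀ x ∈ G, x.Nonempty)
    (hclosed : ∀ x ∈ G, ∀ y ⊆ x, y.Nonempty → y ∈ G) :
    Matrix.det (Matrix.of fun x y : {z // z ∈ G} =>
        if ((x : Finset V) ∩ (y : Finset V)).Nonempty then (1 : ℤ) else 0)
      = (-1) ^ (G.filter fun x => Even x.card).card :=
  unimodularity_general G hne hclosed
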